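/- Suppose encoders satisfy KL[N(μ_E(x), σ²I_K) ‖ N(0, I_K)] ≤ I_c for two inputs x, y. Then the Gaussian density value E(μ_E(y)|x) = (2πσ²)^{−K/2} exp(−‖μ_E(y) − μ_E(x)‖²/(2σ²)) is bounded below by C(I_c) = exp(−4I_c·exp(2I_c/K + 1) − (K/2)·log(4I_c/K + 2) − (K/2)·log 2π), a positive quantity. -/
import Mathlib


open Real

set_option maxHeartbeats 1000000 in
/-- If the KL divergences `KL[N(μ_E(x), σ²I_K) ‖ N(0, I_K)]` and
`KL[N(μ_E(y), σ²I_K) ‖ N(0, I_K)]` are both bounded by `I_c`, then the Gaussian density value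
`E(μ_E(y)|x)` is bounded below by the positive quantity
`C(I_c) = exp(−4I_c·exp(2I_c/K + 1) − (K/2)·log(4I_c/K + 2) − (K/2)·log 2π)`. -/
theorem encoder_density_lower_bound (K : ℕ) (hK : 1 ≤ K) (σ Ic : ℝ) (hσ : 0 < σ)
    (hIc : 0 < Ic) {X : Type*} (μE : X → EuclideanSpace ℝ (Fin K)) (x y : X)
    (hklx : (1 / 2) * ((K : ℝ) * σ ^ 2 + ‖μE x‖ ^ 2 - K - K * log (σ ^ 2)) ≤ Ic)
    (hkly : (1 / 2) * ((K : ℝ) * σ ^ 2 + ‖μE y‖ ^ 2 - K - K * log (σ ^ 2)) ≤ Ic)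
    (E : X → EuclideanSpace ℝ (Fin K) → ℝ)
    (hE : ∀ x' z, E x' z =
      (2 * π * σ ^ 2) ^ (-(K : ℝ) / 2) * exp (-‖z - μE x'‖ ^ 2 / (2 * σ ^ 2)))
    (C : ℝ) (hC : C = exp (-4 * Ic * exp (2 * Ic / K + 1)
      - (K / 2 : ℝ) * log (4 * Ic / K + 2) - (K / 2 : ℝ) * log (2 * π))) :
    E x (μE y) ≥ C ∧ 0 < C := by
  have hs : (0:ℝ) < σ ^ 2 := by positivity
  have hKpos : (0:ℝ) < K := by exact_mod_cast Nat.lt_of_lt_of_le Nat.zero_lt_one hK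
  have hlog1 : log (σ ^ 2) ≤ σ ^ 2 - 1 := Real.log_le_sub_one_of_pos hs
  -- K*(s - 1 - log s) ≤ 2 Ic
  have hK2 : (K : ℝ) * (σ ^ 2 - 1 - log (σ ^ 2)) ≤ 2 * Ic := by
    nlinarith [sq_nonneg ‖μE x‖]
  have hx2 : ‖μE x‖ ^ 2 ≤ 2 * Ic := by nlinarith [hKpos, hlog1]
  have hy2 : ‖μE y‖ ^ 2 ≤ 2 * Ic := by nlinarith [hKpos, hlog1]
  have hdn := norm_sub_le (μE y) (μE x)
  have hdiff : ‖μE y - μE x‖ ^ 2 ≤ 8 * Ic := by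
    nlinarith [norm_nonneg (μE y), norm_nonneg (μE x), norm_nonneg (μE y - μE x),
      sq_nonneg (‖μE y‖ - ‖μE x‖)]
  -- upper bound on σ²
  have hu2 : Real.sqrt (σ ^ 2) ^ 2 = σ ^ 2 := Real.sq_sqrt hs.le
  have hupos : (0:ℝ) < Real.sqrt (σ ^ 2) := Real.sqrt_pos.mpr hs
  have hlogu : log (Real.sqrt (σ ^ 2)) ≤ Real.sqrt (σ ^ 2) - 1 :=
    Real.log_le_sub_one_of_pos hupos
  have hlogsqrt : log (Real.sqrt (σ ^ 2)) = log (σ ^ 2) / 2 := Real.log_sqrt hs.le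
  have hsK : (K : ℝ) * σ ^ 2 ≤ 4 * Ic + 2 * K := by
    nlinarith [sq_nonneg (Real.sqrt (σ ^ 2) - 2), mul_le_mul_of_nonneg_left
      (show log (σ ^ 2) ≤ σ ^ 2 / 2 by nlinarith [sq_nonneg (Real.sqrt (σ ^ 2) - 2)])
      hKpos.le]
  have hDeq : 4 * Ic / K + 2 = (4 * Ic + 2 * K) / K := by field_simp
  have hsle : σ ^ 2 ≤ 4 * Ic / K + 2 := by
    rw [hDeq, le_div_iff₀ hKpos]; linarith [hsK]
  -- lower bound: 1/σ² ≤ exp(2Ic/K + 1)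
  have hnl : -log (σ ^ 2) ≤ 2 * Ic / K + 1 := by
    rw [div_add' _ _ _ (ne_of_gt hKpos), le_div_iff₀ hKpos]
    have hKs : (0:ℝ) ≤ (K:ℝ) * σ ^ 2 := by positivity
    linarith [hK2]
  have hinv : 1 / σ ^ 2 ≤ exp (2 * Ic / K + 1) := by
    have h1 : 1 / σ ^ 2 = exp (-log (σ ^ 2)) := by
      rw [Real.exp_neg, Real.exp_log hs, one_div]
    rw [h1]
    exact Real.exp_le_exp.mpr hnl
  have hEs : 1 ≤ exp (2 * Ic / K + 1) * σ ^ 2 := by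
    rw [← div_le_iff₀ hs]; exact hinv
  -- density term bound
  have hd : ‖μE y - μE x‖ ^ 2 / (2 * σ ^ 2) ≤ 4 * Ic * exp (2 * Ic / K + 1) := by
    rw [div_le_iff₀ (by positivity)]
    have h8 : 8 * Ic * 1 ≤ 8 * Ic * (exp (2 * Ic / K + 1) * σ ^ 2) :=
      mul_le_mul_of_nonneg_left hEs (by linarith)
    linarith [hdiff]
  have hDpos : (0:ℝ) < 4 * Ic / K + 2 := by positivity
  have hlogs : log (σ ^ 2) ≤ log (4 * Ic / K + 2) := Real.log_le_log hs hsle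
  have h2πs : (0:ℝ) < 2 * π * σ ^ 2 := by positivity
  constructor
  · rw [hE, hC, ge_iff_le, Real.rpow_def_of_pos h2πs, ← Real.exp_add, Real.exp_le_exp]
    rw [show (2 * π * σ ^ 2) = (2 * π) * σ ^ 2 by ring,
      Real.log_mul (by positivity) (ne_of_gt hs)]
    have hklog : (K:ℝ) / 2 * log (σ ^ 2) ≤ (K:ℝ) / 2 * log (4 * Ic / K + 2) :=
      mul_le_mul_of_nonneg_left hlogs (by positivity)
    have hdd : -‖μE y - μE x‖ ^ 2 / (2 * σ ^ 2) ≥ -(4 * Ic * exp (2 * Ic / K + 1)) := by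
      rw [neg_div]; linarith [hd]
    nlinarith [hklog, hdd]
  · rw [hC]; exact Real.exp_pos _
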